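/- Let G be a groupoid and let ℂ[G^(n)] denote, for each object c, the free ℂ-vector space on the set of composable strings (g_1,…,g_n) with t(g_1) = c, with G acting by (g_1,…,g_n)·g = (g⁻¹ g_1, g_2,…,g_n). Define t(g_0,…,g_n) = (g_0 g_1 ⋯ g_n, (g_1 ⋯ g_n)⁻¹, g_1,…,g_{n−1}) on strings (g_0,…,g_n) of composable arrows with t(g_0) = s(g_n) (loops of length n+1 based anywhere). Then t^{n+1} = id on such strings. -/

import Mathlib

/-- A groupoid presented algebraically: objects, arrows, source/target, a (partially
meaningful) composition `comp g h = g ∘ h` (meaningful when `src g = tgt h`), inverses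
and units, with the usual axioms holding on composable arrows. -/
structure PreGroupoid where
  Obj : Type
  Arr : Type
  src : Arr → Obj
  tgt : Arr → Obj
  comp : Arr → Arr → Arr
  inv : Arr → Arr
  unit : Obj → Arr
  src_comp : ∀ g h, src g = tgt h → src (comp g h) = src h
  tgt_comp : ∀ g h, src g = tgt h → tgt (comp g h) = tgt g
  assoc : ∀ g h k, src g = tgt h → src h = tgt k → comp (comp g h) k = comp g (comp h k)
  src_unit : ∀ c, src (unit c) = c
  tgt_unit : ∀ c, tgt (unit c) = c
  id_comp : ∀ g, comp (unit (tgt g)) g = g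
  comp_id : ∀ g, comp g (unit (src g)) = g
  src_inv : ∀ g, src (inv g) = tgt g
  tgt_inv : ∀ g, tgt (inv g) = src g
  comp_inv : ∀ g, comp g (inv g) = unit (tgt g)
  inv_comp : ∀ g, comp (inv g) g = unit (src g)

/-- The product `gs i · gs (i+1) ⋯ gs (i+k)` of a segment of a string of arrows. -/
def prodSeg (P : PreGroupoid) (gs : ℕ → P.Arr) (i : ℕ) : ℕ → P.Arr
  | 0 => gs i
  | (k + 1) => P.comp (prodSeg P gs i k) (gs (i + k + 1))

/-- The cyclic operator on the (cyclic) nerve: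
`t(g_0,…,g_n) = (g_0 g_1 ⋯ g_n, (g_1 ⋯ g_n)⁻¹, g_1,…,g_{n-1})`. -/
def cycOp (P : PreGroupoid) (n : ℕ) (gs : ℕ → P.Arr) : ℕ → P.Arr := fun j =>
  if j = 0 then prodSeg P gs 0 n
  else if j = 1 then P.inv (prodSeg P gs 1 (n - 1))
  else gs (j - 1)

/-! Writing `p_j = g_0 g_1 ⋯ g_j` for the prefix products of a composable string, the operator
`t` acts on `(p_0, …, p_n)` as the cyclic rotation `p'_0 = p_n`, `p'_{j+1} = p_j`, because
`p'_1 = (g_0 g_1 ⋯ g_n)(g_1 ⋯ g_n)⁻¹ = g_0`. Hence `t^{n+1}` fixes all prefix products, and these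
determine the string, since `g_{j+1} = p_j⁻¹ p_{j+1}`. -/

namespace PreGroupoid

def IsComposable (P : PreGroupoid) (k : ℕ) (gs : ℕ → P.Arr) : Prop :=
  ∀ i < k, P.src (gs i) = P.tgt (gs (i + 1))

variable {P : PreGroupoid}

lemma IsComposable.mono {k l : ℕ} {gs : ℕ → P.Arr} (h : P.IsComposable l gs) (hkl : k ≤ l) :
    P.IsComposable k gs :=
  fun i hi => h i (by omega)

lemma IsComposable.shift {i k : ℕ} {gs : ℕ → P.Arr} (h : P.IsComposable (i + k) gs) :
    P.IsComposable k (fun m => gs (i + m)) :=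
  fun m hm => h (i + m) (by omega)

lemma comp_inv_cancel_right {g h : P.Arr} (hgh : P.src g = P.tgt h) :
    P.comp (P.comp g h) (P.inv h) = g := by
  rw [P.assoc _ _ _ hgh (P.tgt_inv h).symm, P.comp_inv, ← hgh, P.comp_id]

lemma inv_comp_cancel_left {g h : P.Arr} (hgh : P.src g = P.tgt h) :
    P.comp (P.inv g) (P.comp g h) = h := by
  rw [← P.assoc _ _ _ (P.src_inv g) hgh, P.inv_comp, hgh, P.id_comp]

lemma comp_left_cancel {x a b : P.Arr} (ha : P.src x = P.tgt a) (hb : P.src x = P.tgt b)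
    (h : P.comp x a = P.comp x b) : a = b := by
  rw [← inv_comp_cancel_left ha, h, inv_comp_cancel_left hb]

lemma src_prodSeg {gs : ℕ → P.Arr} {i : ℕ} :
    ∀ {k}, P.IsComposable k (fun m => gs (i + m)) →
      P.src (prodSeg P gs i k) = P.src (gs (i + k))
  | 0, _ => rfl
  | k + 1, h => by
    have ih := src_prodSeg (h.mono k.le_succ)
    exact P.src_comp _ _ (ih.trans (h k k.lt_succ_self))

lemma tgt_prodSeg {gs : ℕ → P.Arr} {i : ℕ} :
    ∀ {k}, P.IsComposable k (fun m => gs (i + m)) → P.tgt (prodSeg P gs i k) = P.tgt (gs i)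
  | 0, _ => rfl
  | k + 1, h => by
    have hs := src_prodSeg (h.mono k.le_succ)
    exact (P.tgt_comp _ _ (hs.trans (h k k.lt_succ_self))).trans (tgt_prodSeg (h.mono k.le_succ))

lemma prodSeg_succ_eq_comp {gs : ℕ → P.Arr} {i : ℕ} :
    ∀ {k}, P.IsComposable (k + 1) (fun m => gs (i + m)) →
      prodSeg P gs i (k + 1) = P.comp (gs i) (prodSeg P gs (i + 1) k)
  | 0, _ => rfl
  | k + 1, h => by
    have htail : P.IsComposable (k + 1) (fun m => gs (i + 1 + m)) :=
      fun m hm => by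
        have e₀ : i + 1 + m = i + (m + 1) := by omega
        have e₁ : i + 1 + (m + 1) = i + (m + 1 + 1) := by omega
        simpa only [e₀, e₁] using h (m + 1) (by omega)
    have h₁ : P.src (gs i) = P.tgt (prodSeg P gs (i + 1) k) := by
      rw [tgt_prodSeg (htail.mono k.le_succ)]
      exact h 0 (by omega)
    have h₂ : P.src (prodSeg P gs (i + 1) k) = P.tgt (gs (i + 1 + k + 1)) :=
      (src_prodSeg (htail.mono k.le_succ)).trans (htail k k.lt_succ_self)
    rw [prodSeg, prodSeg_succ_eq_comp (h.mono (Nat.le_succ _)),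
      show i + (k + 1) + 1 = i + 1 + k + 1 by omega, P.assoc _ _ _ h₁ h₂, prodSeg]

lemma eq_of_prodSeg_eq {n : ℕ} {gs hs : ℕ → P.Arr} (hg : P.IsComposable n gs)
    (hh : P.IsComposable n hs) (hp : ∀ j ≤ n, prodSeg P gs 0 j = prodSeg P hs 0 j) :
    ∀ j ≤ n, gs j = hs j
  | 0, _ => hp 0 (Nat.zero_le n)
  | m + 1, hm => by
    have hsrc : ∀ {fs : ℕ → P.Arr}, P.IsComposable n fs →
        P.src (prodSeg P fs 0 m) = P.tgt (fs (m + 1)) := fun hf =>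
      (src_prodSeg (by simpa using hf.mono (by omega : m ≤ n))).trans (by simpa using hf m hm)
    refine comp_left_cancel (hsrc hg) ((hp m (by omega)).symm ▸ hsrc hh) ?_
    simpa [prodSeg, hp m (by omega)] using hp (m + 1) hm

section cycOp

variable {n : ℕ} {gs : ℕ → P.Arr}

lemma cycOp_zero : cycOp P n gs 0 = prodSeg P gs 0 n := rfl

lemma cycOp_one : cycOp P (n + 1) gs 1 = P.inv (prodSeg P gs 1 n) := rfl

lemma isComposable_cycOp (h : P.IsComposable n gs) : P.IsComposable n (cycOp P n gs) := by
  intro i hi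
  obtain ⟨n, rfl⟩ : ∃ n', n = n' + 1 := ⟨n - 1, by omega⟩
  have htail : P.IsComposable n (fun m => gs (1 + m)) := (h.mono (by omega)).shift
  rcases i with _ | _ | i
  · rw [cycOp_zero, cycOp_one, P.tgt_inv, src_prodSeg (by simpa using h), src_prodSeg htail]
    congr 2
    omega
  · rw [cycOp_one, P.src_inv, tgt_prodSeg htail]
    rfl
  · exact h (i + 1) (by omega)

lemma prodSeg_cycOp_succ (h : P.IsComposable n gs) :
    ∀ {m}, m < n → prodSeg P (cycOp P n gs) 0 (m + 1) = prodSeg P gs 0 m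
  | 0, hn => by
    obtain ⟨n, rfl⟩ : ∃ n', n = n' + 1 := ⟨n - 1, by omega⟩
    have htail : P.IsComposable n (fun m => gs (1 + m)) := (h.mono (by omega)).shift
    have hsrc : P.src (gs 0) = P.tgt (prodSeg P gs 1 n) := by
      rw [tgt_prodSeg htail]; exact h 0 hn
    show P.comp (cycOp P (n + 1) gs 0) (cycOp P (n + 1) gs 1) = gs 0
    rw [cycOp_zero, cycOp_one, prodSeg_succ_eq_comp (by simpa using h)]
    exact comp_inv_cancel_right hsrc
  | m + 1, hm => by
    rw [prodSeg, prodSeg_cycOp_succ h (by omega)]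
    rfl

lemma prodSeg_cycOp (h : P.IsComposable n gs) {j : ℕ} (hj : j ≤ n) :
    prodSeg P (cycOp P n gs) 0 j = prodSeg P gs 0 ((j + n) % (n + 1)) := by
  rcases j with _ | m
  · rw [Nat.zero_add, Nat.mod_eq_of_lt n.lt_succ_self]
    exact cycOp_zero
  · rw [prodSeg_cycOp_succ h hj, show m + 1 + n = m + (n + 1) by omega, Nat.add_mod_right,
      Nat.mod_eq_of_lt (by omega)]

lemma isComposable_iterate_cycOp (h : P.IsComposable n gs) (k : ℕ) :
    P.IsComposable n ((cycOp P n)^[k] gs) := by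
  induction k with
  | zero => exact h
  | succ k ih => exact Function.iterate_succ_apply' (cycOp P n) k gs ▸ isComposable_cycOp ih

lemma prodSeg_iterate_cycOp (h : P.IsComposable n gs) (k : ℕ) {j : ℕ} (hj : j ≤ n) :
    prodSeg P ((cycOp P n)^[k] gs) 0 j = prodSeg P gs 0 ((j + k * n) % (n + 1)) := by
  induction k generalizing j with
  | zero =>
    rw [Function.iterate_zero_apply, Nat.zero_mul, Nat.add_zero, Nat.mod_eq_of_lt (by omega)]
  | succ k ih =>
    rw [Function.iterate_succ_apply', prodSeg_cycOp (isComposable_iterate_cycOp h k) hj,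
      ih (Nat.le_of_lt_succ (Nat.mod_lt _ n.succ_pos)), Nat.mod_add_mod]
    congr 2
    ring

lemma prodSeg_iterate_cycOp_self (h : P.IsComposable n gs) {j : ℕ} (hj : j ≤ n) :
    prodSeg P ((cycOp P n)^[n + 1] gs) 0 j = prodSeg P gs 0 j := by
  rw [prodSeg_iterate_cycOp h _ hj, Nat.add_mul_mod_self_left, Nat.mod_eq_of_lt (by omega)]

end cycOp

end PreGroupoid

theorem stmt18_general (P : PreGroupoid) (n : ℕ) (gs : ℕ → P.Arr)
    (hcomp : ∀ i, i < n → P.src (gs i) = P.tgt (gs (i + 1))) :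
    ∀ j ≤ n, (cycOp P n)^[n + 1] gs j = gs j :=
  PreGroupoid.eq_of_prodSeg_eq (PreGroupoid.isComposable_iterate_cycOp hcomp _) hcomp
    fun _ hj => PreGroupoid.prodSeg_iterate_cycOp_self hcomp hj

/-- On strings `(g_0,…,g_n)` of composable arrows (`s(g_i) = t(g_{i+1})`) with
`t(g_0) = s(g_n)`, the cyclic operator
`t(g_0,…,g_n) = (g_0 g_1 ⋯ g_n, (g_1 ⋯ g_n)⁻¹, g_1,…,g_{n-1})`
on the nerve of a groupoid satisfies `t^{n+1} = id`. -/
theorem stmt18 (P : PreGroupoid) (n : ℕ) (gs : ℕ → P.Arr)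
    (hcomp : ∀ i, i < n → P.src (gs i) = P.tgt (gs (i + 1)))
    (hcyc : P.tgt (gs 0) = P.src (gs n)) :
    ∀ j ≤ n, (cycOp P n)^[n + 1] gs j = gs j :=
  stmt18_general P n gs hcomp
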